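/- Let k ≥ 3 be an odd integer. Every cocircuit of the matroid N_k^L / {e_1, e_2} has at least 4 elements. -/

import Mathlib

open Set

namespace Matroid

variable {α : Type}

/-- Deletion of a set from a matroid. -/
def delete' (M : Matroid α) (D : Set α) : Matroid α := M ↾ (M.E \ D)

/-- Contraction of a set in a matroid. -/
def contract' (M : Matroid α) (C : Set α) : Matroid α := (M✶.delete' C)✶

/-- A circuit: a minimal dependent set. -/
def IsCircuit' (M : Matroid α) (C : Set α) : Prop :=
  M.Dep C ∧ ∀ D, D ⊂ C → M.Indep D

/-- A cocircuit: a circuit of the dual. -/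
def IsCocircuit' (M : Matroid α) (C : Set α) : Prop := M✶.IsCircuit' C

/-- A hyperplane: a flat whose rank is one less than the rank of the matroid. -/
def IsHyperplane (M : Matroid α) (H : Set α) : Prop :=
  M.IsFlat H ∧ ∃ I B, M.IsBasis I H ∧ M.IsBase B ∧ I.encard + 1 = B.encard

/-- A circuit-hyperplane: a set that is both a circuit and a hyperplane. -/
def IsCircuitHyperplane (M : Matroid α) (C : Set α) : Prop :=
  M.IsCircuit' C ∧ M.IsHyperplane C

/-- A free basis: a basis `B` such that `B ∪ {e}` is a circuit for every `e ∈ E(M) - B`. -/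
def IsFreeBase (M : Matroid α) (B : Set α) : Prop :=
  M.IsBase B ∧ ∀ e ∈ M.E \ B, M.IsCircuit' (insert e B)

/-- A connected matroid: the ground set is nonempty and every two distinct elements of the
ground set lie in a common circuit. -/
def IsConnected (M : Matroid α) : Prop :=
  M.E.Nonempty ∧ ∀ x ∈ M.E, ∀ y ∈ M.E, x ≠ y → ∃ C, M.IsCircuit' C ∧ x ∈ C ∧ y ∈ C

/-- `M` is a frame matroid: there is a matroid `M'` whose ground set is the union of (a copy of)
`E(M)` and a set `V` disjoint from it, such that `V` is a basis of `M'`, deleting `V` from `M'`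
yields (the copy of) `M`, and for every `e ∈ E(M)` the unique circuit of `M'` contained in
`V ∪ {e}` has at most three elements. -/
def IsFrame (M : Matroid α) : Prop :=
  ∃ (β : Type) (M' : Matroid (α ⊕ β)) (V : Set (α ⊕ β)),
    M'.Finite ∧
    M'.E = (Sum.inl '' M.E) ∪ V ∧
    Disjoint (Sum.inl '' M.E) V ∧
    M'.IsBase V ∧
    M'.delete' V = M.map Sum.inl Sum.inl_injective.injOn ∧
    ∀ e ∈ M.E, ∃ C, M'.IsCircuit' C ∧ C ⊆ insert (Sum.inl e) V ∧ C.encard ≤ 3 ∧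
      ∀ C', M'.IsCircuit' C' → C' ⊆ insert (Sum.inl e) V → C' = C

/-- `N` is a graphic matroid: there are a set `W` of vertices and an assignment of an unordered
pair of vertices to each element of the ground set, such that a subset `I` of the ground set is
independent exactly when every nonempty `J ⊆ I` uses strictly more vertices than it has edges
(i.e. the associated multigraph is a forest). -/
def IsGraphic (N : Matroid α) : Prop :=
  ∃ (W : Type) (f : α → Sym2 W),
    ∀ I : Set α, N.Indep I ↔ (I ⊆ N.E ∧ ∀ J ⊆ I, J.Nonempty →
      J.encard < {w : W | ∃ e ∈ J, w ∈ f e}.encard)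

/-- `M` is a lifted-graphic matroid: there is a matroid `M'` whose ground set is (a copy of)
`E(M)` plus one extra element `f`, such that `M' \ f = M` and `M' / f` is graphic. -/
def IsLiftedGraphic (M : Matroid α) : Prop :=
  ∃ M' : Matroid (α ⊕ Unit),
    M'.Finite ∧
    M'.E = (Sum.inl '' M.E) ∪ {Sum.inr ()} ∧
    M'.delete' {Sum.inr ()} = M.map Sum.inl Sum.inl_injective.injOn ∧
    (M'.contract' {Sum.inr ()}).IsGraphic

/-- `M` and `N` are isomorphic matroids. -/
def Iso' {β : Type} (M : Matroid α) (N : Matroid β) : Prop :=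
  ∃ (f : α → β) (hf : Set.InjOn f M.E), M.map f hf = N

end Matroid

section Graphs

/-- The edges of the graph `G_k`: `a i`, `b i`, `c i`, `d i` for `i : Fin k`
(with `i` representing the index `i+1` of the paper), together with `e1` and `e2`. -/
inductive Edge (k : ℕ) : Type where
  | a : Fin k → Edge k
  | b : Fin k → Edge k
  | c : Fin k → Edge k
  | d : Fin k → Edge k
  | e1 : Edge k
  | e2 : Edge k
deriving DecidableEq

/-- The vertices of `G_k`: `Sum.inl (i, false)` is `x_{i+1}` (so `Sum.inl (0, false)` is `s_1`),
`Sum.inl (i, true)` is `y_{i+1}` (so `Sum.inl (0, true)` is `s_2`), `Sum.inr false` is `t_1` and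
`Sum.inr true` is `t_2`.  There are `2k+2` vertices in all. -/
abbrev Vertex (k : ℕ) := (Fin k × Bool) ⊕ Bool

variable {k : ℕ}

/-- The tail of each edge of `G_k`. -/
def Edge.tail [NeZero k] : Edge k → Vertex k
  | .a i => .inl (i, false)
  | .b i => .inl (i, false)
  | .c i => .inl (i, true)
  | .d i => .inl (i, true)
  | .e1 => .inl (0, false)
  | .e2 => .inl (0, true)

/-- The head of each edge of `G_k`; the head `x_1` is the vertex `t_1 = Sum.inr false` and
the head `y_1` is the vertex `t_2 = Sum.inr true`. -/
def Edge.head [NeZero k] : Edge k → Vertex k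
  | .a i => if i + 1 = 0 then .inr false else .inl (i + 1, false)
  | .b i => if i + 1 = 0 then .inr true else .inl (i + 1, true)
  | .c i => if i + 1 = 0 then .inr false else .inl (i + 1, false)
  | .d i => if i + 1 = 0 then .inr true else .inl (i + 1, true)
  | .e1 => .inr false
  | .e2 => .inr true

/-- The set `P = {a_1, …, a_k, d_1, …, d_k}`. -/
def Pset (k : ℕ) : Set (Edge k) := {e | ∃ i, e = .a i ∨ e = .d i}

/-- The set `Q = {b_1, …, b_k, c_1, …, c_k}`. -/
def Qset (k : ℕ) : Set (Edge k) := {e | ∃ i, e = .b i ∨ e = .c i}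

/-- The last index of `Fin k`, representing the paper's index `k`. -/
def lastIdx (k : ℕ) [NeZero k] : Fin k :=
  ⟨k - 1, Nat.sub_lt (Nat.pos_of_ne_zero (NeZero.ne k)) Nat.one_pos⟩

/-- The group labels for the frame construction: `γ(a_k) = γ(b_k) = γ(c_k) = γ(d_k) = 2` and
`γ(e) = 1` for every other edge. -/
def gammaF [NeZero k] : Edge k → ℝ
  | .a i => if i = lastIdx k then 2 else 1
  | .b i => if i = lastIdx k then 2 else 1
  | .c i => if i = lastIdx k then 2 else 1
  | .d i => if i = lastIdx k then 2 else 1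
  | .e1 => 1
  | .e2 => 1

/-- The matrix `A_k` of the frame construction, with rows indexed by the vertices of `G_k` and
columns by its edges: the column of an edge `e` has entry `1` in the row of the tail of `e`,
entry `-γ(e)` in the row of the head of `e`, and `0` elsewhere. -/
def frameMatrix (k : ℕ) [NeZero k] : Matrix (Vertex k) (Edge k) ℝ :=
  fun v e => if v = e.tail then 1 else if v = e.head then -gammaF e else 0

/-- The group labels for the lifted construction: `γ(a_i) = γ(d_i) = 1` for all `i` and
`γ(e) = 0` for every other edge. -/
def gammaL : Edge k → ℝ
  | .a _ => 1
  | .d _ => 1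
  | _ => 0

/-- The matrix `A_k^L` of the lifted construction, with rows indexed by the vertices of `G_k`
together with one additional row: the column of an edge `e` has entry `1` in the row of the tail
of `e`, entry `-1` in the row of the head of `e`, entry `γ(e)` in the additional row, and `0`
elsewhere. -/
def liftMatrix (k : ℕ) [NeZero k] : Matrix (Vertex k ⊕ Unit) (Edge k) ℝ :=
  fun v e => match v with
  | .inl v => if v = e.tail then 1 else if v = e.head then -1 else 0
  | .inr _ => gammaL e

/-- `N` is the matroid on the column index set of the matrix `A` in which a set is independent
if and only if the corresponding columns of `A` are linearly independent over `ℝ`. -/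
def IsColMatroid {m n : Type} (A : Matrix m n ℝ) (N : Matroid n) : Prop :=
  N.E = Set.univ ∧
  ∀ I : Set n, N.Indep I ↔ LinearIndependent ℝ (fun e : I => fun v : m => A v (e : n))

/-- The vertex of the contracted graph `G_k / {e_1, e_2}` corresponding to a vertex of `G_k`:
`t_1` is identified with `s_1` and `t_2` with `s_2`, leaving the `2k` vertices `Fin k × Bool`. -/
def contractVertex [NeZero k] : Vertex k → Fin k × Bool
  | .inl p => p
  | .inr b => (0, b)

/-- The tail, in `G_k / {e_1, e_2}`, of an edge. -/
def Edge.ctail [NeZero k] (e : Edge k) : Fin k × Bool := contractVertex e.tail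

/-- The head, in `G_k / {e_1, e_2}`, of an edge. -/
def Edge.chead [NeZero k] (e : Edge k) : Fin k × Bool := contractVertex e.head

/-- `v` is a vertex of the subgraph of `G_k / {e_1, e_2}` formed by the edge set `S`. -/
def Touches [NeZero k] (S : Set (Edge k)) (v : Fin k × Bool) : Prop :=
  ∃ e ∈ S, e.ctail = v ∨ e.chead = v

/-- The degree of the vertex `v` in the subgraph of `G_k / {e_1, e_2}` with edge set `S`. -/
noncomputable def degreeIn [NeZero k] (S : Set (Edge k)) (v : Fin k × Bool) : ℕ :=
  {e ∈ S | e.ctail = v}.ncard + {e ∈ S | e.chead = v}.ncard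

/-- The edge set `S` forms a cycle of the multigraph `G_k / {e_1, e_2}`: the subgraph it
spans is connected and `2`-regular. -/
def IsCycleIn [NeZero k] (S : Set (Edge k)) : Prop :=
  S.Nonempty ∧ Edge.e1 ∉ S ∧ Edge.e2 ∉ S ∧
  (∀ v, Touches S v → degreeIn S v = 2) ∧
  (∀ T ⊆ S, T.Nonempty → (S \ T).Nonempty → ∃ v, Touches T v ∧ Touches (S \ T) v)

/-- The star `δ_G(v)` of a vertex `v` of the contracted graph `G_k / {e_1, e_2}`:
all edges of that graph incident with `v`. -/
def contractStar (k : ℕ) [NeZero k] (v : Fin k × Bool) : Set (Edge k) :=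
  {e | e ≠ .e1 ∧ e ≠ .e2 ∧ (e.ctail = v ∨ e.chead = v)}

/-- The star `δ(v)` of a vertex `v` of the graph `G_k`: all edges of `G_k` incident with `v`. -/
def star (k : ℕ) [NeZero k] (v : Vertex k) : Set (Edge k) :=
  {e | e.tail = v ∨ e.head = v}

end Graphs

/-!
Suppose a cocircuit `C` of `N_k^L / {e_1, e_2}` had at most three elements. It avoids `e_1, e_2`
and its complement does not span `N_k^L`, so some functional `(p, t)` (a potential `p` on the
vertices, a weight `t` on the extra row) kills every column outside `C` but not all columns.
Killing `e_1` and `e_2` turns `p` into a potential `q` on `G_k / {e_1, e_2}`. On a level `i` missing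
at most one edge, three of its four equations survive and give
`|q x_{i+1} - q x_i| = |q y_i - q x_i| = |q y_{i+1} - q x_{i+1}| = |t|`.
If some level avoids `C`, its 4-cycle `a_i c_i⁻¹ d_i b_i⁻¹` has label sum `2`, so `t = 0`; otherwise
`C` meets each of the `k = 3` levels once, and the three steps `±t` around `x_1 x_2 x_3` cannot sum
to `0` unless `t = 0`. At most one level meets `C` twice; the others form a path through all
vertices along which `q` is then constant, so `(p, t)` kills every column after all.
-/

namespace Matroid

variable {α : Type} {M : Matroid α} {X C : Set α}

theorem IsCocircuit'.disjoint_and_not_spanning_compl (hC : (M.contract' X).IsCocircuit' C) :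
    Disjoint C X ∧ ¬ M.Spanning (M.E \ C) := by
  have hdep : (M ／ X)✶.Dep C := hC.1
  rw [dual_contract, delete_dep_iff] at hdep
  refine ⟨hdep.2, fun hsp => hdep.1.not_indep ?_⟩
  have hCE : C ⊆ M.E := hdep.1.subset_ground
  rwa [spanning_iff_compl_coindep, sdiff_sdiff_cancel_left hCE] at hsp

end Matroid

section ColumnMatroid

variable {m n : Type} {A : Matrix m n ℝ} {N : Matroid n}

theorem IsColMatroid.insert_indep_iff (hN : IsColMatroid A N) {I : Set n} {e : n}
    (hI : N.Indep I) (he : e ∉ I) :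
    N.Indep (insert e I) ↔ A.col e ∉ Submodule.span ℝ (A.col '' I) := by
  rw [hN.2] at hI ⊢
  change LinearIndepOn ℝ A.col I at hI
  change LinearIndepOn ℝ A.col (insert e I) ↔ _
  rw [linearIndepOn_insert he, and_iff_right hI]

theorem IsColMatroid.spanning_of_forall_mem_span (hN : IsColMatroid A N) {S : Set n}
    (hS : ∀ e, A.col e ∈ Submodule.span ℝ (A.col '' S)) : N.Spanning S := by
  obtain ⟨I, hI⟩ := N.exists_isBasis S (by simp [hN.1])
  have hle : Submodule.span ℝ (A.col '' S) ≤ Submodule.span ℝ (A.col '' I) := by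
    refine Submodule.span_le.mpr ?_
    rintro _ ⟨s, hs, rfl⟩
    by_cases hsI : s ∈ I
    · exact Submodule.subset_span (mem_image_of_mem _ hsI)
    · by_contra hns
      exact (hI.insert_dep ⟨hs, hsI⟩).not_indep ((hN.insert_indep_iff hI.indep hsI).mpr hns)
  have hB : N.IsBase I := hI.indep.isBase_of_forall_insert fun e he hins =>
    (hN.insert_indep_iff hI.indep he.2).mp hins (hle (hS e))
  exact hB.spanning_of_superset hI.subset (by simp [hN.1])

end ColumnMatroid

namespace Fin

open Fin.NatCast

variable {n : ℕ} [NeZero n]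

theorem add_one_ne_self (hn : 2 ≤ n) (i : Fin n) : i + 1 ≠ i := by
  intro h
  have h1 : n ∣ 1 := natCast_eq_zero.mp (by simpa using h)
  exact absurd (Nat.le_of_dvd Nat.one_pos h1) (by omega)

theorem apply_eq_apply_of_forall_ne_apply_add_one {α : Type*} {f : Fin n → α} {L : Fin n}
    (h : ∀ i ≠ L, f (i + 1) = f i) (i j : Fin n) : f i = f j := by
  have hpath : ∀ m : ℕ, m < n → f (L + 1 + m) = f (L + 1) := by
    intro m
    induction m with
    | zero => simp
    | succ m ih =>
      intro hm
      have hne : L + 1 + m ≠ L := by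
        intro hL
        have : ((m + 1 : ℕ) : Fin n) = 0 := by
          push_cast
          calc (m : Fin n) + 1 = L + 1 + m - L := by abel
            _ = 0 := by rw [hL, sub_self]
        exact absurd (Nat.le_of_dvd m.succ_pos (natCast_eq_zero.mp this)) (by omega)
      rw [Nat.cast_succ, ← add_assoc, h _ hne, ih (by omega)]
  have hall : ∀ i, f i = f (L + 1) := fun i => by
    simpa using hpath (i - (L + 1)).val (i - (L + 1)).isLt
  rw [hall i, hall j]

end Fin

section Counting

variable {α β : Type*}

theorem Set.exists_forall_ne_subsingleton_inter_preimage [Nonempty β] {f : α → β} {C : Set α}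
    (hC : C.encard ≤ 3) : ∃ L, ∀ i ≠ L, (C ∩ f ⁻¹' {i}).Subsingleton := by
  by_contra! h
  obtain ⟨i, -, hi⟩ := h (Classical.arbitrary β)
  obtain ⟨j, hji, hj⟩ := h i
  have hdisj : Disjoint (C ∩ f ⁻¹' {j}) (C ∩ f ⁻¹' {i}) :=
    Set.disjoint_left.mpr fun x hxj hxi => hji (hxj.2.symm.trans hxi.2)
  have h4 : 4 ≤ C.encard := calc
    (4 : ℕ∞) = 2 + 2 := by norm_num
    _ ≤ (C ∩ f ⁻¹' {j}).encard + (C ∩ f ⁻¹' {i}).encard :=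
      add_le_add (Order.add_one_le_of_lt (one_lt_encard_iff_nontrivial.mpr hj))
        (Order.add_one_le_of_lt (one_lt_encard_iff_nontrivial.mpr hi))
    _ = (C ∩ f ⁻¹' {j} ∪ C ∩ f ⁻¹' {i}).encard := (encard_union_eq hdisj).symm
    _ ≤ C.encard := encard_le_encard (union_subset inter_subset_left inter_subset_left)
  exact absurd (h4.trans hC) (by norm_num)

theorem Set.injOn_of_image_eq_univ [Fintype β] {f : α → β} {C : Set α} (hf : f '' C = univ)
    (hC : C.encard ≤ Fintype.card β) : InjOn f C := by
  refine (finite_of_encard_le_coe hC).injOn_of_encard_image_eq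
    (le_antisymm (encard_image_le f C) ?_)
  rwa [hf, encard_univ, ENat.card_eq_coe_fintype_card]

end Counting

section Levels

variable {k : ℕ} [NeZero k]

namespace Edge

def level : Edge k → Fin k
  | a i | b i | c i | d i => i
  | e1 | e2 => 0

theorem three_notMem_of_subsingleton {C : Set (Edge k)} {i : Fin k}
    (hi : (C ∩ level ⁻¹' {i}).Subsingleton) :
    (b i ∉ C ∧ c i ∉ C ∧ d i ∉ C) ∨ (a i ∉ C ∧ c i ∉ C ∧ d i ∉ C) ∨
    (a i ∉ C ∧ b i ∉ C ∧ d i ∉ C) ∨ (a i ∉ C ∧ b i ∉ C ∧ c i ∉ C) := by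
  have notMem : ∀ {e e' : Edge k}, e ∈ C → e ≠ e' → e.level = i → e'.level = i → e' ∉ C :=
    fun he hne hl hl' he' => hne (hi ⟨he, hl⟩ ⟨he', hl'⟩)
  by_cases hA : a i ∈ C
  · exact .inl ⟨notMem hA (by simp) rfl rfl, notMem hA (by simp) rfl rfl,
      notMem hA (by simp) rfl rfl⟩
  by_cases hB : b i ∈ C
  · exact .inr (.inl ⟨hA, notMem hB (by simp) rfl rfl, notMem hB (by simp) rfl rfl⟩)
  by_cases hC : c i ∈ C
  · exact .inr (.inr (.inl ⟨hA, hB, notMem hC (by simp) rfl rfl⟩))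
  exact .inr (.inr (.inr ⟨hA, hB, hC⟩))

end Edge

@[simp] lemma contractVertex_inl (x : Fin k × Bool) : contractVertex (.inl x) = x := rfl

@[simp] lemma contractVertex_ite (i : Fin k) (b : Bool) :
    contractVertex (if i + 1 = 0 then .inr b else .inl (i + 1, b)) = (i + 1, b) := by
  split_ifs with h <;> simp [contractVertex, h]

/-- The functional with coordinates `q` on the vertices of `G_k / {e_1, e_2}` and `t` on the extra
row kills the column of every edge outside `C`. -/
def AnnihilatesOff (C : Set (Edge k)) (q : Fin k × Bool → ℝ) (t : ℝ) : Prop :=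
  ∀ e ∉ C, q e.chead = q e.ctail + gammaL e * t

variable {C : Set (Edge k)} {q : Fin k × Bool → ℝ} {t : ℝ}

theorem AnnihilatesOff.level_eqs (hq : AnnihilatesOff C q t) (i : Fin k) :
    (Edge.a i ∉ C → q (i + 1, false) = q (i, false) + t) ∧
    (Edge.b i ∉ C → q (i + 1, true) = q (i, false)) ∧
    (Edge.c i ∉ C → q (i + 1, false) = q (i, true)) ∧
    (Edge.d i ∉ C → q (i + 1, true) = q (i, true) + t) := by
  refine ⟨fun h => ?_, fun h => ?_, fun h => ?_, fun h => ?_⟩ <;>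
    simpa [Edge.chead, Edge.ctail, Edge.head, Edge.tail, gammaL] using hq _ h

theorem AnnihilatesOff.abs_eq_of_subsingleton (hq : AnnihilatesOff C q t) {i : Fin k}
    (hi : (C ∩ Edge.level ⁻¹' {i}).Subsingleton) :
    |q (i + 1, false) - q (i, false)| = |t| ∧ |q (i, true) - q (i, false)| = |t| ∧
      |q (i + 1, true) - q (i + 1, false)| = |t| := by
  obtain ⟨ha, hb, hc, hd⟩ := hq.level_eqs i
  rcases Edge.three_notMem_of_subsingleton hi with ⟨h1, h2, h3⟩ | ⟨h1, h2, h3⟩ | ⟨h1, h2, h3⟩ |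
      ⟨h1, h2, h3⟩ <;>
    simp only [h1, h2, h3, not_false_eq_true, forall_const] at ha hb hc hd <;>
    refine ⟨?_, ?_, ?_⟩ <;> rw [abs_eq_abs] <;> first | (left; linarith) | (right; linarith)

theorem eq_zero_of_abs_sub_eq_abs {x y z t : ℝ} (hxy : |y - x| = |t|) (hyz : |z - y| = |t|)
    (hzx : |x - z| = |t|) : t = 0 := by
  rw [abs_eq_abs] at hxy hyz hzx
  rcases hxy with h1 | h1 <;> rcases hyz with h2 | h2 <;> rcases hzx with h3 | h3 <;> linarith

theorem AnnihilatesOff.eq_zero (hk : 3 ≤ k) (hC : C.encard ≤ 3) (hq : AnnihilatesOff C q t) :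
    t = 0 := by
  by_cases hcov : Edge.level '' C = univ
  · have hk3 : k = 3 := by
      have : (k : ℕ∞) ≤ 3 := calc
        (k : ℕ∞) = (Edge.level '' C).encard := by simp [hcov, encard_univ]
        _ ≤ C.encard := encard_image_le _ _
        _ ≤ 3 := hC
      have : k ≤ 3 := by exact_mod_cast this
      omega
    subst hk3
    have hinj := injOn_of_image_eq_univ hcov (by simpa using hC)
    have h i := (hq.abs_eq_of_subsingleton (i := i) fun e he e' he' =>
      hinj he.1 he'.1 (he.2.trans he'.2.symm)).1
    exact eq_zero_of_abs_sub_eq_abs (h 0) (h 1) (h 2)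
  · obtain ⟨i, hi⟩ := (ne_univ_iff_exists_notMem _).mp hcov
    have hnot : ∀ e : Edge k, e.level = i → e ∉ C := fun e he heC => hi ⟨e, heC, he⟩
    obtain ⟨ha, hb, hc, hd⟩ := hq.level_eqs i
    linarith [ha (hnot _ rfl), hb (hnot _ rfl), hc (hnot _ rfl), hd (hnot _ rfl)]

theorem AnnihilatesOff.apply_eq_apply_zero (hk : 3 ≤ k) (hC : C.encard ≤ 3)
    (hq : AnnihilatesOff C q t) (x : Fin k × Bool) : q x = q (0, false) := by
  obtain ⟨L, hL⟩ := exists_forall_ne_subsingleton_inter_preimage (f := Edge.level) hC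
  have hlevel : ∀ i ≠ L, q (i + 1, false) = q (i, false) ∧ q (i, true) = q (i, false) ∧
      q (i + 1, true) = q (i + 1, false) := fun i hi => by
    simpa [hq.eq_zero hk hC, sub_eq_zero] using hq.abs_eq_of_subsingleton (hL i hi)
  have hu := Fin.apply_eq_apply_of_forall_ne_apply_add_one (f := fun i => q (i, false))
    fun i hi => (hlevel i hi).1
  have hv : ∀ i, q (i, true) = q (i, false) := fun i => by
    by_cases hi : i = L
    · have hne : L - 1 ≠ L := fun h =>
        Fin.add_one_ne_self (by omega) (L - 1) (by rw [sub_add_cancel, h])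
      simpa [hi] using (hlevel (L - 1) hne).2.2
    · exact (hlevel i hi).2.1
  obtain ⟨i, _ | _⟩ := x
  · exact hu i 0
  · exact (hv i).trans (hu i 0)

theorem AnnihilatesOff.chead_eq (hk : 3 ≤ k) (hC : C.encard ≤ 3) (hq : AnnihilatesOff C q t)
    (e : Edge k) : q e.chead = q e.ctail + gammaL e * t := by
  rw [hq.eq_zero hk hC, hq.apply_eq_apply_zero hk hC e.chead,
    hq.apply_eq_apply_zero hk hC e.ctail]
  ring

end Levels

section LiftMatrix

variable {k : ℕ} [NeZero k]

theorem Edge.tail_ne_head (hk : 2 ≤ k) (e : Edge k) : e.tail ≠ e.head := by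
  have hne : ∀ i : Fin k, i ≠ i + 1 := fun i => (Fin.add_one_ne_self hk i).symm
  cases e <;> simp only [Edge.tail, Edge.head] <;> (try split_ifs) <;> simp [hne]

theorem liftMatrix_col (hk : 2 ≤ k) (e : Edge k) :
    (liftMatrix k).col e = Pi.single (.inl e.tail) 1 - Pi.single (.inl e.head) 1 +
      gammaL e • Pi.single (.inr ()) 1 := by
  have hne := e.tail_ne_head hk
  funext r
  rcases r with w | _
  · by_cases h1 : w = e.tail <;> by_cases h2 : w = e.head <;>
      simp_all [Matrix.col, liftMatrix]
  · simp [Matrix.col, liftMatrix]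

theorem liftMatrix_col_mem_span_compl (hk : 3 ≤ k) {C : Set (Edge k)} (hC : C.encard ≤ 3)
    (he1 : Edge.e1 ∉ C) (he2 : Edge.e2 ∉ C) (e : Edge k) :
    (liftMatrix k).col e ∈ Submodule.span ℝ ((liftMatrix k).col '' Cᶜ) := by
  by_contra hnot
  obtain ⟨f, hfe, hf⟩ := Submodule.exists_dual_map_eq_bot_of_notMem hnot inferInstance
  set p : Vertex k → ℝ := fun w => f (Pi.single (.inl w) 1)
  set t := f (Pi.single (.inr ()) 1)
  have hfcol : ∀ e, f ((liftMatrix k).col e) = p e.tail - p e.head + gammaL e * t := fun e => by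
    simp [liftMatrix_col (k := k) (by omega), p, t]
  have hzero : ∀ e ∉ C, p e.head = p e.tail + gammaL e * t := fun e he => by
    have : f ((liftMatrix k).col e) = 0 := by
      rw [← Submodule.mem_bot ℝ, ← hf]
      exact Submodule.mem_map_of_mem (Submodule.subset_span ⟨e, he, rfl⟩)
    linarith [hfcol e]
  -- killing the columns of `e_1` and `e_2` identifies `t_1` with `s_1` and `t_2` with `s_2`
  have hp : ∀ w, p w = p (.inl (contractVertex w)) := by
    rintro (x | _ | _)
    · rfl
    · simpa [Edge.tail, Edge.head, gammaL, contractVertex] using hzero _ he1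
    · simpa [Edge.tail, Edge.head, gammaL, contractVertex] using hzero _ he2
  have hq : AnnihilatesOff C (fun x => p (.inl x)) t := fun e he => by
    simpa [Edge.chead, Edge.ctail, ← hp] using hzero e he
  apply hfe
  have he := hq.chead_eq hk hC e
  simp only [Edge.chead, Edge.ctail] at he
  rw [hfcol, hp e.tail, hp e.head]
  linarith

end LiftMatrix

theorem cocircuits_of_NkL_contract_large_general (k : ℕ) [NeZero k] (hk : 3 ≤ k)
    (N : Matroid (Edge k)) (hN : IsColMatroid (liftMatrix k) N) :
    ∀ C : Set (Edge k), (N.contract' {Edge.e1, Edge.e2}).IsCocircuit' C → 4 ≤ C.encard := by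
  intro C hC
  obtain ⟨hdisj, hnsp⟩ := hC.disjoint_and_not_spanning_compl
  by_contra! hlt
  refine hnsp (hN.spanning_of_forall_mem_span fun e => ?_)
  rw [hN.1, ← compl_eq_univ_sdiff]
  exact liftMatrix_col_mem_span_compl hk (Order.le_of_lt_add_one hlt)
    (disjoint_right.mp hdisj (by simp)) (disjoint_right.mp hdisj (by simp)) e

/-- Every cocircuit of `N_k^L / {e_1, e_2}` has at least `4` elements. -/
theorem cocircuits_of_NkL_contract_large (k : ℕ) [NeZero k] (hk : 3 ≤ k) (hodd : Odd k)
    (N : Matroid (Edge k)) (hN : IsColMatroid (liftMatrix k) N) :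
    ∀ C : Set (Edge k), (N.contract' {Edge.e1, Edge.e2}).IsCocircuit' C → 4 ≤ C.encard :=
  cocircuits_of_NkL_contract_large_general k hk N hN
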